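/- Let T: ℤ × ℤ → ℝ satisfy the quasi-periodicity T(n+g+1, t) = T(n, t) + an + bt + c with 2b - a < (g+1)L, and define X^{(k)}_{n,t} = min_{j=0..k}[jL + 2T(n-j-1, t+1) + T(n,t) + T(n-1,t) - (2T(n-1,t+1) + T(n-j,t) + T(n-j-1,t))]. Then X^{(g+1)}_{n,t} = X^{(g)}_{n,t}. -/

import Mathlib

/-- The tropical permanent-type expression `X^{(k)}_{n,t}`. -/
noncomputable def Xfun (L : ℝ) (T : ℤ → ℤ → ℝ) (k : ℕ) (n t : ℤ) : ℝ :=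
  (Finset.range (k + 1)).inf' Finset.nonempty_range_add_one fun j =>
    (j : ℝ) * L + 2 * T (n - j - 1) (t + 1) + T n t + T (n - 1) t -
      (2 * T (n - 1) (t + 1) + T (n - j) t + T (n - j - 1) t)

/-!
The `j = 0` term of `X^{(k)}_{n,t}` vanishes, while quasi-periodicity collapses the `j = g + 1`
term to the constant `(g + 1) L + a - 2 b`, which is positive. So the extra term never
undercuts the minimum already attained among `j ≤ g`.
-/

open Finset

theorem Finset.inf'_range_succ_of_le {α : Type*} [LinearOrder α] (f : ℕ → α) {i k : ℕ}
    (hi : i ≤ k) (h : f i ≤ f (k + 1)) :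
    (range (k + 2)).inf' nonempty_range_add_one f =
      (range (k + 1)).inf' nonempty_range_add_one f := by
  refine le_antisymm (le_inf' _ _ fun j hj => inf'_le _ ?_) (le_inf' _ _ fun j hj => ?_)
  · exact mem_range.2 (by have := mem_range.1 hj; omega)
  rcases Nat.lt_succ_iff_lt_or_eq.1 (mem_range.1 hj) with hj | rfl
  · exact inf'_le _ (mem_range.2 hj)
  · exact (inf'_le _ (mem_range.2 (Nat.lt_succ_of_le hi))).trans h

noncomputable def Xterm (L : ℝ) (T : ℤ → ℤ → ℝ) (n t : ℤ) (j : ℕ) : ℝ :=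
  (j : ℝ) * L + 2 * T (n - j - 1) (t + 1) + T n t + T (n - 1) t -
    (2 * T (n - 1) (t + 1) + T (n - j) t + T (n - j - 1) t)

theorem Xfun_eq_inf'_Xterm (L : ℝ) (T : ℤ → ℤ → ℝ) (k : ℕ) (n t : ℤ) :
    Xfun L T k n t = (range (k + 1)).inf' nonempty_range_add_one (Xterm L T n t) :=
  rfl

theorem Xterm_zero (L : ℝ) (T : ℤ → ℤ → ℝ) (n t : ℤ) : Xterm L T n t 0 = 0 := by
  simp [Xterm]

section QuasiPeriodic

variable {g : ℕ} {a b c : ℝ} {T : ℤ → ℤ → ℝ}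

theorem eq_of_quasiPeriodic (hquasi : ∀ n t : ℤ, T (n + g + 1) t = T n t + (a * n + b * t + c))
    (m t : ℤ) : T m t = T (m - g - 1) t + (a * (m - g - 1 : ℤ) + b * t + c) := by
  rw [← hquasi]
  congr 1
  ring

theorem Xterm_succ_of_quasiPeriodic (L : ℝ)
    (hquasi : ∀ n t : ℤ, T (n + g + 1) t = T n t + (a * n + b * t + c)) (n t : ℤ) :
    Xterm L T n t (g + 1) = (g + 1) * L + a - 2 * b := by
  have hn : n - ((g + 1 : ℕ) : ℤ) = n - g - 1 := by push_cast; ring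
  rw [Xterm, hn, eq_of_quasiPeriodic hquasi n t, eq_of_quasiPeriodic hquasi (n - 1) t,
    eq_of_quasiPeriodic hquasi (n - 1) (t + 1)]
  push_cast
  ring_nf

end QuasiPeriodic

theorem X_succ_eq_X_general (g : ℕ) (L a b c : ℝ) (T : ℤ → ℤ → ℝ)
    (hquasi : ∀ n t : ℤ, T (n + g + 1) t = T n t + (a * n + b * t + c))
    (hL : 2 * b - a < (g + 1) * L) :
    ∀ n t : ℤ, Xfun L T (g + 1) n t = Xfun L T g n t := by
  intro n t
  have hterm : Xterm L T n t 0 ≤ Xterm L T n t (g + 1) := by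
    rw [Xterm_zero, Xterm_succ_of_quasiPeriodic L hquasi]
    linarith
  rw [Xfun_eq_inf'_Xterm, Xfun_eq_inf'_Xterm]
  exact Finset.inf'_range_succ_of_le _ (Nat.zero_le g) hterm

theorem X_succ_eq_X (g : ℕ) (hg : 0 < g) (L a b c : ℝ) (T : ℤ → ℤ → ℝ)
    (hquasi : ∀ n t : ℤ, T (n + g + 1) t = T n t + (a * n + b * t + c))
    (hL : 2 * b - a < (g + 1) * L) :
    ∀ n t : ℤ, Xfun L T (g + 1) n t = Xfun L T g n t :=
  X_succ_eq_X_general g L a b c T hquasi hL
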